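/- For all real α ≥ 1, β ≥ 1 and all real k > 0, l > 0, one has l²·β²·Ξ₀(α,β) + k·l·α·β·Ξ₁(α,β) + k²·α²·Ξ₂(α,β) > 0. (This is the quantity whose negative gives the sign of the boundary derivative in the proof of Lemma 4.1, showing the derivative of (k√(Z₁Z₂)+l√(Z₁Z₃)+(k+l)√(Z₂Z₃))Z₄ is strictly negative on the boundary of 𝒟⁺ when Z₁ ≠ 0.) -/
import Mathlib


/-- Ξ₀(α,β) = (α+1)²β² + (1−α)(2α²+3α+2)β + (α²−1)². -/
def Ξ₀ (α β : ℝ) : ℝ := (α+1)^2*β^2 + (1-α)*(2*α^2+3*α+2)*β + (α^2-1)^2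

/-- Ξ₁(α,β) = 2αβ(α−β)² + (α+β)(2α² − 3αβ + 2β²) + (α−β)² + α + β + 2. -/
def Ξ₁ (α β : ℝ) : ℝ :=
  2*α*β*(α-β)^2 + (α+β)*(2*α^2 - 3*α*β + 2*β^2) + (α-β)^2 + α + β + 2

/-- Ξ₂(α,β) = (β+1)²α² + (1−β)(2β²+3β+2)α + (β²−1)². -/
def Ξ₂ (α β : ℝ) : ℝ := (β+1)^2*α^2 + (1-β)*(2*β^2+3*β+2)*α + (β^2-1)^2

lemma Xi0_pos (α β : ℝ) (hα : 1 ≤ α) (hβ : 1 ≤ β) : 0 < Ξ₀ α β := by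
  unfold Ξ₀
  nlinarith [sq_nonneg ((α+1)*β-(α^2-1)), mul_nonneg (sub_nonneg.2 hα) (by linarith : (0:ℝ) ≤ β),
    sq_nonneg β, mul_pos (by linarith : (0:ℝ) < α) (by linarith : (0:ℝ) < β)]

lemma Xi1_pos (α β : ℝ) (hα : 1 ≤ α) (hβ : 1 ≤ β) : 0 < Ξ₁ α β := by
  unfold Ξ₁
  nlinarith [mul_nonneg (mul_nonneg (by linarith : (0:ℝ)≤α) (by linarith : (0:ℝ)≤β)) (sq_nonneg (α-β)),
    mul_nonneg (by linarith : (0:ℝ)≤α+β) (sq_nonneg (α-β)),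
    mul_nonneg (mul_nonneg (by linarith : (0:ℝ)≤α+β) (by linarith : (0:ℝ)≤α)) (by linarith : (0:ℝ)≤β),
    sq_nonneg (α-β)]

lemma Xi2_pos (α β : ℝ) (hα : 1 ≤ α) (hβ : 1 ≤ β) : 0 < Ξ₂ α β := by
  unfold Ξ₂
  nlinarith [sq_nonneg ((β+1)*α-(β^2-1)), mul_nonneg (sub_nonneg.2 hβ) (by linarith : (0:ℝ) ≤ α),
    sq_nonneg α, mul_pos (by linarith : (0:ℝ) < β) (by linarith : (0:ℝ) < α)]

/-- The key positivity in the proof of Lemma 4.1: the boundary derivative of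
(k√(Z₁Z₂)+l√(Z₁Z₃)+(k+l)√(Z₂Z₃))Z₄ is strictly negative on the boundary of 𝒟⁺
when Z₁ ≠ 0. -/
theorem Xi_combination_pos (α β k l : ℝ) (hα : 1 ≤ α) (hβ : 1 ≤ β)
    (hk : 0 < k) (hl : 0 < l) :
    0 < l^2 * β^2 * Ξ₀ α β + k * l * α * β * Ξ₁ α β + k^2 * α^2 * Ξ₂ α β := by
  have h0 := Xi0_pos α β hα hβ
  have h1 := Xi1_pos α β hα hβ
  have h2 := Xi2_pos α β hα hβ
  have hα0 : (0:ℝ) < α := by linarith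
  have hβ0 : (0:ℝ) < β := by linarith
  positivity
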